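/- arXiv:0707.1958 — 4 statements merged into one kernel-verified Lean document; each statement's English description precedes it below -/
import Mathlib

section
/- Let r : ℝⁿ → ℝ be defined on the positive orthant by r(x) = (x₁^p + ⋯ + xₙ^p)^{1/p} for a real constant p > 0. Then for any real m, the function u(x) = r(x)^m satisfies L u = β(m) · u, where L u = Σᵢ (r/xᵢ)^p [xᵢ² ∂²u/∂xᵢ² + αᵢ xᵢ ∂u/∂xᵢ] + λ u and β(m) = m(m + 2φ) + λ with 2φ = -p + n(p-1) + Σᵢ αᵢ. -/
open Real Set

/-- Partial derivative in the `i`-th coordinate. -/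
noncomputable def pd {n : ℕ} (i : Fin n) (u : (Fin n → ℝ) → ℝ) (x : Fin n → ℝ) : ℝ :=
  deriv (fun t => u (Function.update x i t)) (x i)

/-- `r x = (x₁^p + ⋯ + xₙ^p)^(1/p)`. -/
noncomputable def rad {n : ℕ} (p : ℝ) (x : Fin n → ℝ) : ℝ :=
  (∑ i, x i ^ p) ^ (1 / p)

/-- The singular operator `L`. -/
noncomputable def Lop {n : ℕ} (p : ℝ) (α : Fin n → ℝ) (lam : ℝ)
    (u : (Fin n → ℝ) → ℝ) : (Fin n → ℝ) → ℝ :=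
  fun x => (∑ i, (rad p x / x i) ^ p *
      ((x i) ^ 2 * pd i (fun y => pd i u y) x + α i * x i * pd i u x)) + lam * u x

/-!
Along the `i`-th coordinate line, `u = rᵐ` is the one-variable function `t ↦ (tᵖ + c)^(m/p)`
with `c = ∑_{j ≠ i} x_jᵖ ≥ 0`, whose first two derivatives are explicit. Writing `S = ∑ x_jᵖ`,
the weight `(r / xᵢ)ᵖ = S / xᵢᵖ` turns the `i`-th summand of `L u` into
`m (m - p) u · xᵢᵖ / S + m (p - 1 + αᵢ) u`, and summing over `i` uses `∑ xᵢᵖ / S = 1`.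
-/

open Finset Function Filter Topology

section OneVariable

variable {p c : ℝ} (m : ℝ) {t : ℝ}

theorem hasDerivAt_rpow_add_const_rpow (hp : p ≠ 0) (hc : 0 ≤ c) (ht : 0 < t) :
    HasDerivAt (fun t : ℝ => (t ^ p + c) ^ (m / p))
      (m * (t ^ p + c) ^ (m / p - 1) * t ^ (p - 1)) t := by
  have hbase : t ^ p + c ≠ 0 := by positivity
  convert ((hasDerivAt_rpow_const (Or.inl ht.ne')).add_const c).rpow_const
    (p := m / p) (Or.inl hbase) using 1
  field_simp

theorem hasDerivAt_mul_rpow_add_const_rpow_mul_rpow (hc : 0 ≤ c) (ht : 0 < t) :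
    HasDerivAt (fun t : ℝ => m * (t ^ p + c) ^ (m / p - 1) * t ^ (p - 1))
      (m * (m / p - 1) * p * (t ^ p + c) ^ (m / p - 1 - 1) * t ^ (p - 1) * t ^ (p - 1)
        + m * (p - 1) * (t ^ p + c) ^ (m / p - 1) * t ^ (p - 1 - 1)) t := by
  have hbase : t ^ p + c ≠ 0 := by positivity
  have hinner := ((hasDerivAt_rpow_const (Or.inl ht.ne')).add_const c).rpow_const
    (p := m / p - 1) (Or.inl hbase)
  refine ((hinner.const_mul m).mul
    (hasDerivAt_rpow_const (p := p - 1) (Or.inl ht.ne'))).congr_deriv ?_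
  ring

end OneVariable

section Radial

variable {n : ℕ} {p : ℝ} {x : Fin n → ℝ}

theorem pd_eq_of_eventuallyEq {u : (Fin n → ℝ) → ℝ} {g : ℝ → ℝ} {g' : ℝ} {i : Fin n}
    (h : (fun t => u (update x i t)) =ᶠ[𝓝 (x i)] g) (hg : HasDerivAt g g' (x i)) :
    pd i u x = g' := by
  rw [pd, h.deriv_eq, hg.deriv]

theorem sum_rpow_update (p : ℝ) (x : Fin n → ℝ) (i : Fin n) (t : ℝ) :
    ∑ j, update x i t j ^ p = t ^ p + ∑ j ∈ univ.erase i, x j ^ p := by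
  rw [← add_sum_erase _ _ (mem_univ i), update_self]
  congr 1
  exact sum_congr rfl fun j hj => by rw [update_of_ne (ne_of_mem_erase hj)]

theorem rad_rpow (hx : ∀ j, 0 ≤ x j) (m : ℝ) : rad p x ^ m = (∑ j, x j ^ p) ^ (m / p) := by
  rw [rad, ← rpow_mul (sum_nonneg fun j _ => rpow_nonneg (hx j) p), one_div_mul_eq_div]

theorem update_pos (hx : ∀ j, 0 < x j) (i : Fin n) {t : ℝ} (ht : 0 < t) :
    ∀ j, 0 < update x i t j :=
  forall_update_iff x (p := fun _ y => 0 < y) |>.mpr ⟨ht, fun j _ => hx j⟩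

theorem pd_rad_rpow (hp : p ≠ 0) (m : ℝ) (hx : ∀ j, 0 < x j) (i : Fin n) :
    pd i (fun y => rad p y ^ m) x = m * (∑ j, x j ^ p) ^ (m / p - 1) * x i ^ (p - 1) := by
  have hc : 0 ≤ ∑ j ∈ univ.erase i, x j ^ p := sum_nonneg fun j _ => rpow_nonneg (hx j).le p
  refine (pd_eq_of_eventuallyEq ?_ (hasDerivAt_rpow_add_const_rpow m hp hc (hx i))).trans ?_
  · filter_upwards [Ioi_mem_nhds (hx i)] with t ht
    rw [rad_rpow (fun j => (update_pos hx i ht j).le), sum_rpow_update]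
  · rw [← add_sum_erase _ _ (mem_univ i)]

theorem pd_pd_rad_rpow (hp : p ≠ 0) (m : ℝ) (hx : ∀ j, 0 < x j) (i : Fin n) :
    pd i (fun y => pd i (fun z => rad p z ^ m) y) x
      = m * (m / p - 1) * p * (∑ j, x j ^ p) ^ (m / p - 1 - 1) * x i ^ (p - 1) * x i ^ (p - 1)
        + m * (p - 1) * (∑ j, x j ^ p) ^ (m / p - 1) * x i ^ (p - 1 - 1) := by
  have hc : 0 ≤ ∑ j ∈ univ.erase i, x j ^ p := sum_nonneg fun j _ => rpow_nonneg (hx j).le p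
  refine (pd_eq_of_eventuallyEq ?_
    (hasDerivAt_mul_rpow_add_const_rpow_mul_rpow (p := p) m hc (hx i))).trans ?_
  · filter_upwards [Ioi_mem_nhds (hx i)] with t ht
    rw [pd_rad_rpow hp m (update_pos hx i ht) i, sum_rpow_update, update_self]
  · rw [← add_sum_erase _ _ (mem_univ i)]

theorem Lop_summand_rad_rpow (hp : p ≠ 0) (m a : ℝ) (hx : ∀ j, 0 < x j) (i : Fin n) :
    (rad p x / x i) ^ p * (x i ^ 2 * pd i (fun y => pd i (fun z => rad p z ^ m) y) x
        + a * x i * pd i (fun z => rad p z ^ m) x)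
      = m * (m - p) * rad p x ^ m * (x i ^ p / ∑ j, x j ^ p)
        + m * (p - 1 + a) * rad p x ^ m := by
  have hxi : 0 < x i := hx i
  have hS : 0 < ∑ j, x j ^ p :=
    (rpow_pos_of_pos hxi p).trans_le (single_le_sum (fun j _ => rpow_nonneg (hx j).le p)
      (mem_univ i))
  have hrad_p : rad p x ^ p = ∑ j, x j ^ p := by
    rw [rad_rpow (fun j => (hx j).le), div_self hp, rpow_one]
  have hrad : 0 ≤ rad p x := rpow_nonneg hS.le _
  rw [pd_pd_rad_rpow hp m hx i, pd_rad_rpow hp m hx i, div_rpow hrad hxi.le,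
    hrad_p, rad_rpow (fun j => (hx j).le)]
  simp only [rpow_sub_one hS.ne', rpow_sub_one hxi.ne']
  field_simp
  ring

end Radial

theorem stmt0 {n : ℕ} (hn : 0 < n) (p : ℝ) (hp : 0 < p) (α : Fin n → ℝ) (lam : ℝ) (m : ℝ)
    (φ : ℝ) (hφ : 2 * φ = -p + n * (p - 1) + ∑ i, α i) :
    ∀ x : Fin n → ℝ, (∀ i, 0 < x i) →
      Lop p α lam (fun y => rad p y ^ m) x = (m * (m + 2 * φ) + lam) * rad p x ^ m := by
  intro x hx
  have hS : 0 < ∑ j, x j ^ p := sum_pos (fun j _ => rpow_pos_of_pos (hx j) p)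
    (univ_nonempty_iff.mpr (Fin.pos_iff_nonempty.mp hn))
  have hsum : ∑ i, x i ^ p / ∑ j, x j ^ p = 1 := by rw [← sum_div, div_self hS.ne']
  simp only [Lop, Lop_summand_rad_rpow hp.ne' m _ hx, sum_add_distrib, ← mul_sum, hsum,
    ← sum_mul, sum_const, card_univ, Fintype.card_fin, nsmul_eq_mul]
  linear_combination (-(m * rad p x ^ m)) * hφ
end

section
/- With E u = x² u'' + α x u' + λ u on (0,∞), φ = (α-1)/2, suppose λ - φ² > 0 and let ν = √(λ - φ²). Then for every positive integer k and every 0 ≤ l ≤ k−1, the functions x ↦ x^{-φ} cos(ν ln x)(ln x)^l and x ↦ x^{-φ} sin(ν ln x)(ln x)^l satisfy E^k u = 0 on (0,∞). -/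
/-!
Under `x = exp t` the Euler operator becomes the constant-coefficient operator
`D = d²/dt² + (α - 1) d/dt + λ`, whose characteristic roots are `-φ ± iν`. The functions
`f_{θ,l} t = exp (-φ t) cos (ν t - θ) t ^ l` satisfy
`D f_{θ,l} = l (l - 1) f_{θ,l-2} - 2 l ν f_{θ+π/2,l-1}`, so `D` lowers the power of `t` and
`D^k f_{θ,l} = 0` for `l < k` by induction on `k`, uniformly in the phase `θ`.
The cosine and sine solutions are the phases `θ = 0` and `θ = π/2`.
-/

open Real Set

/-- The Euler operator `E u = x² u'' + α x u' + λ u`. -/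
noncomputable def Eul (α lam : ℝ) (u : ℝ → ℝ) : ℝ → ℝ :=
  fun x => x ^ 2 * deriv (deriv u) x + α * x * deriv u x + lam * u x

open scoped ContDiff

noncomputable def eulLog (α lam : ℝ) (v : ℝ → ℝ) : ℝ → ℝ :=
  fun t => deriv (deriv v) t + (α - 1) * deriv v t + lam * v t

section ChangeOfVariables

variable (α lam : ℝ)

theorem eul_eqOn {u w : ℝ → ℝ} (h : EqOn u w (Ioi 0)) :
    EqOn (Eul α lam u) (Eul α lam w) (Ioi 0) := by
  intro x hx
  have he : u =ᶠ[nhds x] w := Filter.eventuallyEq_of_mem (isOpen_Ioi.mem_nhds hx) h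
  simp only [Eul]
  rw [he.deriv_eq, he.deriv.deriv_eq, h hx]

theorem eul_iterate_eqOn (k : ℕ) {u w : ℝ → ℝ} (h : EqOn u w (Ioi 0)) :
    EqOn ((Eul α lam)^[k] u) ((Eul α lam)^[k] w) (Ioi 0) := by
  induction k with
  | zero => exact h
  | succ k ih =>
    simp only [Function.iterate_succ_apply']
    exact eul_eqOn α lam ih

theorem eul_comp_log {v : ℝ → ℝ} (hv : ContDiff ℝ 2 v) :
    EqOn (Eul α lam (v ∘ log)) (eulLog α lam v ∘ log) (Ioi 0) := by
  have hv₁ : Differentiable ℝ v := hv.differentiable two_ne_zero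
  have hv₂ : Differentiable ℝ (deriv v) := hv.differentiable_deriv_two
  have hd : ∀ y : ℝ, y ≠ 0 → HasDerivAt (v ∘ log) (deriv v (log y) * y⁻¹) y := fun y hy =>
    (hv₁ (log y)).hasDerivAt.comp y (hasDerivAt_log hy)
  intro x hx
  have hx₀ : x ≠ 0 := hx.ne'
  have hdd : deriv (deriv (v ∘ log)) x
      = deriv (deriv v) (log x) * x⁻¹ * x⁻¹ + deriv v (log x) * -(x ^ 2)⁻¹ := by
    have hev : deriv (v ∘ log) =ᶠ[nhds x] fun y => deriv v (log y) * y⁻¹ := by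
      filter_upwards [compl_singleton_mem_nhds hx₀] with y hy
      exact (hd y hy).deriv
    rw [hev.deriv_eq]
    exact (((hv₂ (log x)).hasDerivAt.comp x (hasDerivAt_log hx₀)).mul (hasDerivAt_inv hx₀)).deriv
  simp only [Eul, eulLog, Function.comp_apply]
  rw [hdd, (hd x hx₀).deriv]
  field_simp
  ring

theorem contDiff_eulLog {v : ℝ → ℝ} (hv : ContDiff ℝ ∞ v) : ContDiff ℝ ∞ (eulLog α lam v) := by
  have hv₁ : ContDiff ℝ ∞ (deriv v) := (contDiff_infty_iff_deriv.mp hv).2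
  have hv₂ : ContDiff ℝ ∞ (deriv (deriv v)) := (contDiff_infty_iff_deriv.mp hv₁).2
  exact (hv₂.add (contDiff_const.mul hv₁)).add (contDiff_const.mul hv)

theorem contDiff_eulLog_iterate (k : ℕ) {v : ℝ → ℝ} (hv : ContDiff ℝ ∞ v) :
    ContDiff ℝ ∞ ((eulLog α lam)^[k] v) := by
  induction k with
  | zero => exact hv
  | succ k ih => rw [Function.iterate_succ_apply']; exact contDiff_eulLog α lam ih

theorem eul_iterate_comp_log (k : ℕ) {v : ℝ → ℝ} (hv : ContDiff ℝ ∞ v) :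
    EqOn ((Eul α lam)^[k] (v ∘ log)) ((eulLog α lam)^[k] v ∘ log) (Ioi 0) := by
  induction k with
  | zero => exact fun _ _ => rfl
  | succ k ih =>
    intro x hx
    rw [Function.iterate_succ_apply', Function.iterate_succ_apply']
    calc Eul α lam ((Eul α lam)^[k] (v ∘ log)) x
        = Eul α lam ((eulLog α lam)^[k] v ∘ log) x := eul_eqOn α lam ih hx
      _ = eulLog α lam ((eulLog α lam)^[k] v) (log x) :=
        eul_comp_log α lam ((contDiff_eulLog_iterate α lam k hv).of_le (by norm_cast)) hx

theorem eulLog_linearCombination {u w : ℝ → ℝ} (hu : ContDiff ℝ 2 u) (hw : ContDiff ℝ 2 w)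
    (a b : ℝ) :
    eulLog α lam (fun t => a * u t + b * w t)
      = fun t => a * eulLog α lam u t + b * eulLog α lam w t := by
  have hu₁ : Differentiable ℝ u := hu.differentiable two_ne_zero
  have hw₁ : Differentiable ℝ w := hw.differentiable two_ne_zero
  have hu₂ : Differentiable ℝ (deriv u) := hu.differentiable_deriv_two
  have hw₂ : Differentiable ℝ (deriv w) := hw.differentiable_deriv_two
  have hd : deriv (fun t => a * u t + b * w t) = fun t => a * deriv u t + b * deriv w t :=
    funext fun t => (((hu₁ t).hasDerivAt.const_mul a).add ((hw₁ t).hasDerivAt.const_mul b)).deriv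
  funext t
  have hdd : deriv (fun t => a * deriv u t + b * deriv w t) t
      = a * deriv (deriv u) t + b * deriv (deriv w) t :=
    (((hu₂ t).hasDerivAt.const_mul a).add ((hw₂ t).hasDerivAt.const_mul b)).deriv
  simp only [eulLog, hd, hdd]
  ring

theorem eulLog_iterate_linearCombination (k : ℕ) {u w : ℝ → ℝ} (hu : ContDiff ℝ ∞ u)
    (hw : ContDiff ℝ ∞ w) (a b : ℝ) :
    (eulLog α lam)^[k] (fun t => a * u t + b * w t)
      = fun t => a * (eulLog α lam)^[k] u t + b * (eulLog α lam)^[k] w t := by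
  induction k generalizing u w with
  | zero => rfl
  | succ k ih =>
    simp only [Function.iterate_succ_apply]
    rw [eulLog_linearCombination α lam (hu.of_le (by norm_cast)) (hw.of_le (by norm_cast)),
      ih (contDiff_eulLog α lam hu) (contDiff_eulLog α lam hw)]

end ChangeOfVariables

section DampedWave

noncomputable def dampedWave (φ ν θ : ℝ) (l : ℕ) (t : ℝ) : ℝ :=
  exp (-φ * t) * cos (ν * t - θ) * t ^ l

variable {φ ν : ℝ}

theorem contDiff_dampedWave (θ : ℝ) (l : ℕ) : ContDiff ℝ ∞ (dampedWave φ ν θ l) := by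
  unfold dampedWave
  fun_prop

theorem dampedWave_add_pi (θ : ℝ) (l : ℕ) :
    dampedWave φ ν (θ + π) l = fun t => -dampedWave φ ν θ l t := by
  funext t
  simp only [dampedWave, sub_add_eq_sub_sub, cos_sub_pi]
  ring

theorem hasDerivAt_dampedWave (θ : ℝ) (l : ℕ) (t : ℝ) :
    HasDerivAt (dampedWave φ ν θ l)
      (-φ * dampedWave φ ν θ l t - ν * dampedWave φ ν (θ + π / 2) l t
        + l * dampedWave φ ν θ (l - 1) t) t := by
  have h : HasDerivAt (dampedWave φ ν θ l) _ t :=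
    (((hasDerivAt_id t).const_mul (-φ)).exp.mul
      (((hasDerivAt_id t).const_mul ν).sub_const θ).cos).mul (hasDerivAt_pow l t)
  convert h using 1
  simp only [dampedWave, sub_add_eq_sub_sub, cos_sub_pi_div_two, id, Pi.mul_apply]
  ring

theorem eulLog_dampedWave {α lam : ℝ} (hα : α = 2 * φ + 1) (hlam : lam = φ ^ 2 + ν ^ 2)
    (θ : ℝ) (l : ℕ) :
    eulLog α lam (dampedWave φ ν θ l) = fun t =>
      (l * (l - 1 : ℕ) : ℝ) * dampedWave φ ν θ (l - 2) t
        + (-2 * l * ν) * dampedWave φ ν (θ + π / 2) (l - 1) t := by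
  subst hα hlam
  funext t
  have hderiv : deriv (dampedWave φ ν θ l) = fun s => -φ * dampedWave φ ν θ l s
      - ν * dampedWave φ ν (θ + π / 2) l s + l * dampedWave φ ν θ (l - 1) s :=
    funext fun s => (hasDerivAt_dampedWave θ l s).deriv
  have hdd : HasDerivAt (deriv (dampedWave φ ν θ l))
      (-φ * (-φ * dampedWave φ ν θ l t - ν * dampedWave φ ν (θ + π / 2) l t
          + l * dampedWave φ ν θ (l - 1) t)
        - ν * (-φ * dampedWave φ ν (θ + π / 2) l t - ν * dampedWave φ ν (θ + π / 2 + π / 2) l t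
          + l * dampedWave φ ν (θ + π / 2) (l - 1) t)
        + l * (-φ * dampedWave φ ν θ (l - 1) t - ν * dampedWave φ ν (θ + π / 2) (l - 1) t
          + (l - 1 : ℕ) * dampedWave φ ν θ (l - 1 - 1) t)) t := by
    rw [hderiv]
    exact (((hasDerivAt_dampedWave θ l t).const_mul (-φ)).sub
      ((hasDerivAt_dampedWave (θ + π / 2) l t).const_mul ν)).add
        ((hasDerivAt_dampedWave θ (l - 1) t).const_mul (l : ℝ))
  have hπ : θ + π / 2 + π / 2 = θ + π := by ring
  have hl : l - 1 - 1 = l - 2 := by omega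
  simp only [eulLog]
  rw [hdd.deriv, hderiv]
  simp only [hπ, hl, dampedWave_add_pi]
  ring

theorem eulLog_iterate_dampedWave {α lam : ℝ} (hα : α = 2 * φ + 1) (hlam : lam = φ ^ 2 + ν ^ 2)
    {k l : ℕ} (hlk : l < k) (θ : ℝ) : (eulLog α lam)^[k] (dampedWave φ ν θ l) = 0 := by
  induction k generalizing l θ with
  | zero => omega
  | succ k ih =>
    rw [Function.iterate_succ_apply, eulLog_dampedWave hα hlam,
      eulLog_iterate_linearCombination α lam k (contDiff_dampedWave _ _) (contDiff_dampedWave _ _)]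
    rcases Nat.eq_zero_or_pos l with rfl | hl
    · funext t; simp
    · rw [ih (by omega), ih (by omega)]; funext t; simp

theorem eul_iterate_dampedWave_log {α lam : ℝ} (hα : α = 2 * φ + 1) (hlam : lam = φ ^ 2 + ν ^ 2)
    {k l : ℕ} (hlk : l < k) (θ : ℝ) {x : ℝ} (hx : 0 < x) :
    (Eul α lam)^[k] (fun y => y ^ (-φ) * cos (ν * log y - θ) * log y ^ l) x = 0 := by
  have hlog : EqOn (fun y => y ^ (-φ) * cos (ν * log y - θ) * log y ^ l)
      (dampedWave φ ν θ l ∘ log) (Ioi 0) := fun y hy => by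
    simp only [dampedWave, Function.comp_apply, rpow_def_of_pos hy, mul_comm (log y) (-φ)]
  rw [eul_iterate_eqOn α lam k hlog hx,
    eul_iterate_comp_log α lam k (contDiff_dampedWave θ l) hx]
  simp [eulLog_iterate_dampedWave hα hlam hlk θ]

end DampedWave

theorem stmt5 (α lam : ℝ) (φ : ℝ) (hφ : φ = (α - 1) / 2) (h : lam - φ ^ 2 > 0)
    (ν : ℝ) (hν : ν = Real.sqrt (lam - φ ^ 2))
    (k : ℕ) (hk : 1 ≤ k) (l : ℕ) (hl : l ≤ k - 1) :
    (∀ x : ℝ, 0 < x →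
        (Eul α lam)^[k]
          (fun y => y ^ (-φ) * Real.cos (ν * Real.log y) * Real.log y ^ l) x = 0) ∧
    (∀ x : ℝ, 0 < x →
        (Eul α lam)^[k]
          (fun y => y ^ (-φ) * Real.sin (ν * Real.log y) * Real.log y ^ l) x = 0) := by
  have hα : α = 2 * φ + 1 := by rw [hφ]; ring
  have hlam : lam = φ ^ 2 + ν ^ 2 := by rw [hν, sq_sqrt h.le]; ring
  have hlk : l < k := by omega
  refine ⟨fun x hx => ?_, fun x hx => ?_⟩
  · simpa only [sub_zero] using eul_iterate_dampedWave_log hα hlam hlk 0 hx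
  · simpa only [cos_sub_pi_div_two] using eul_iterate_dampedWave_log hα hlam hlk (π / 2) hx
end

section
/- With E u = x² u'' + α x u' + λ u on (0,∞), φ = (α-1)/2, suppose φ² = λ (double root of the indicial polynomial). Then for every positive integer k and every 0 ≤ l ≤ 2k−1, the function x ↦ x^{-φ}(ln x)^l satisfies E^k u = 0 on (0,∞). -/
open Real Set

/-!
In the variable `t = log x`, conjugation by `x ^ (-φ)` turns `E` into `d²/dt²` when `φ` is a
double root of the indicial polynomial: `E (x ^ (-φ) * g (log x)) = x ^ (-φ) * g'' (log x)`.
Hence `E^k (x ^ (-φ) * g (log x)) = x ^ (-φ) * g⁽²ᵏ⁾ (log x)`, which vanishes for `g t = t ^ l`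
as soon as `l < 2k`.
-/

open Filter Topology
open scoped ContDiff

variable {α lam φ x : ℝ} {g : ℝ → ℝ}

lemma Eul_congr_of_eventuallyEq {u v : ℝ → ℝ} (h : u =ᶠ[𝓝 x] v) :
    Eul α lam u x = Eul α lam v x := by
  simp only [Eul, h.eq_of_nhds, h.deriv_eq, h.deriv.deriv_eq]

lemma hasDerivAt_rpow_mul_comp_log (a : ℝ) (hg : DifferentiableAt ℝ g (log x)) (hx : 0 < x) :
    HasDerivAt (fun y => y ^ a * g (log y))
      (x ^ (a - 1) * (a * g (log x) + deriv g (log x))) x := by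
  refine ((hasDerivAt_rpow_const (p := a) (Or.inl hx.ne')).mul
    (hg.hasDerivAt.comp x (hasDerivAt_log hx.ne'))).congr_deriv ?_
  rw [rpow_sub_one hx.ne', Function.comp_apply]
  field_simp

lemma Eul_rpow_mul_comp_log (hφ : φ = (α - 1) / 2) (hlam : φ ^ 2 = lam)
    (hg : Differentiable ℝ g) (hg' : Differentiable ℝ (deriv g)) (hx : 0 < x) :
    Eul α lam (fun y => y ^ (-φ) * g (log y)) x = x ^ (-φ) * deriv (deriv g) (log x) := by
  set h : ℝ → ℝ := fun t => -φ * g t + deriv g t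
  have hh : HasDerivAt h (-φ * deriv g (log x) + deriv (deriv g) (log x)) (log x) :=
    ((hg _).hasDerivAt.const_mul _).add (hg' _).hasDerivAt
  have hderiv : deriv (fun y => y ^ (-φ) * g (log y)) =ᶠ[𝓝 x]
      fun y => y ^ (-φ - 1) * h (log y) := by
    filter_upwards [Ioi_mem_nhds hx] with y hy
    exact (hasDerivAt_rpow_mul_comp_log _ (hg _) hy).deriv
  have hderiv2 : deriv (deriv fun y => y ^ (-φ) * g (log y)) x =
      x ^ (-φ - 1 - 1) * ((-φ - 1) * h (log x) + deriv h (log x)) := by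
    rw [hderiv.deriv_eq, (hasDerivAt_rpow_mul_comp_log _ hh.differentiableAt hx).deriv]
  simp only [Eul, hderiv2, hderiv.eq_of_nhds, hh.deriv, h, rpow_sub_one hx.ne']
  have hα : α = 2 * φ + 1 := by rw [hφ]; ring
  subst hα hlam
  field_simp
  ring

lemma Eul_iterate_rpow_mul_comp_log (hφ : φ = (α - 1) / 2) (hlam : φ ^ 2 = lam)
    (hg : ContDiff ℝ ∞ g) (k : ℕ) (hx : 0 < x) :
    (Eul α lam)^[k] (fun y => y ^ (-φ) * g (log y)) x =
      x ^ (-φ) * iteratedDeriv (2 * k) g (log x) := by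
  have hdiff (m : ℕ) : Differentiable ℝ (iteratedDeriv m g) :=
    hg.differentiable_iteratedDeriv m (by exact_mod_cast ENat.natCast_lt_top m)
  induction k generalizing x with
  | zero => simp
  | succ k ih =>
    have hiter : (Eul α lam)^[k] (fun y => y ^ (-φ) * g (log y)) =ᶠ[𝓝 x]
        fun y => y ^ (-φ) * iteratedDeriv (2 * k) g (log y) := by
      filter_upwards [Ioi_mem_nhds hx] with y hy
      exact ih hy
    rw [Function.iterate_succ_apply', Eul_congr_of_eventuallyEq hiter,
      Eul_rpow_mul_comp_log hφ hlam (hdiff _) (by rw [← iteratedDeriv_succ]; exact hdiff _) hx,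
      ← iteratedDeriv_succ, ← iteratedDeriv_succ]
    rfl

theorem stmt6 (α lam : ℝ) (φ : ℝ) (hφ : φ = (α - 1) / 2) (h : φ ^ 2 = lam)
    (k : ℕ) (hk : 1 ≤ k) (l : ℕ) (hl : l ≤ 2 * k - 1) :
    ∀ x : ℝ, 0 < x →
      (Eul α lam)^[k] (fun y => y ^ (-φ) * Real.log y ^ l) x = 0 := by
  intro x hx
  have hl' : l < 2 * k := by omega
  rw [Eul_iterate_rpow_mul_comp_log (g := (· ^ l)) hφ h (contDiff_id.pow l) k hx,
    iteratedDeriv_pow, Nat.descFactorial_eq_zero_iff_lt.mpr hl']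
  simp
end

section
/- Let α, λ ∈ ℝ with (α-1)² = 4λ, φ = (α-1)/2, and let E u = x²u'' + αxu' + λu. Then E u = (D + φ)² u where D = x d/dx, and for every positive integer k, the solution space of E^k u = 0 on (0,∞) is exactly span{x^{-φ}(ln x)^l : 0 ≤ l ≤ 2k−1}. -/
open Real Set

/-- The scaling operator `D u = x u'`. -/
noncomputable def Dop (u : ℝ → ℝ) : ℝ → ℝ := fun x => x * deriv u x

open Filter Polynomial
open scoped ContDiff

private lemma mem_nhds_Ioi' {x : ℝ} (hx : x ∈ Ioi (0:ℝ)) : Ioi (0:ℝ) ∈ nhds x :=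
  isOpen_Ioi.mem_nhds hx

private lemma diffAt {g : ℝ → ℝ} (hg : ContDiffOn ℝ ∞ g (Ioi 0)) {x : ℝ}
    (hx : x ∈ Ioi (0:ℝ)) : DifferentiableAt ℝ g x := by
  have h := (hg x hx).contDiffAt (mem_nhds_Ioi' hx)
  exact h.differentiableAt (by simp)

private lemma dop_smooth {g : ℝ → ℝ} (hg : ContDiffOn ℝ ∞ g (Ioi 0)) :
    ContDiffOn ℝ ∞ (Dop g) (Ioi 0) := by
  have hd : ContDiffOn ℝ ∞ (deriv g) (Ioi 0) :=
    ((contDiffOn_infty_iff_deriv_of_isOpen isOpen_Ioi).1 hg).2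
  exact contDiffOn_id.mul hd

private lemma dop_congr {f g : ℝ → ℝ} (hfg : EqOn f g (Ioi 0)) :
    EqOn (Dop f) (Dop g) (Ioi 0) := by
  intro x hx
  have h : f =ᶠ[nhds x] g := eventuallyEq_of_mem (mem_nhds_Ioi' hx) hfg
  simp only [Dop, h.deriv_eq]

private lemma eul_congr (α lam : ℝ) {f g : ℝ → ℝ} (hfg : EqOn f g (Ioi 0)) :
    EqOn (Eul α lam f) (Eul α lam g) (Ioi 0) := by
  intro x hx
  have h : f =ᶠ[nhds x] g := eventuallyEq_of_mem (mem_nhds_Ioi' hx) hfg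
  simp only [Eul, h.deriv_eq, h.deriv.deriv_eq, hfg hx]

private lemma eul_iter_congr (α lam : ℝ) (m : ℕ) {f g : ℝ → ℝ} (hfg : EqOn f g (Ioi 0)) :
    EqOn ((Eul α lam)^[m] f) ((Eul α lam)^[m] g) (Ioi 0) := by
  induction m generalizing f g with
  | zero => simpa using hfg
  | succ m ih =>
    intro x hx
    rw [Function.iterate_succ_apply, Function.iterate_succ_apply]
    exact ih (eul_congr α lam hfg) hx

private lemma smooth_rpow_mul {g : ℝ → ℝ} (hg : ContDiffOn ℝ ∞ g (Ioi 0)) (c : ℝ) :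
    ContDiffOn ℝ ∞ (fun y => y ^ c * g y) (Ioi 0) := by
  refine ContDiffOn.mul (fun x hx => ?_) hg
  exact (Real.contDiffAt_rpow_const_of_ne (ne_of_gt hx)).contDiffWithinAt

/-- The key pointwise identity `E u = (D+φ)² u` expanded. -/
private lemma eul_eq (α lam φ : ℝ) (hα : α = 2*φ+1) (hlam : lam = φ^2) {u : ℝ → ℝ}
    (hu : ContDiffOn ℝ ∞ u (Ioi 0)) {x : ℝ} (hx : x ∈ Ioi (0:ℝ)) :
    Eul α lam u x = Dop (Dop u) x + 2 * φ * Dop u x + φ ^ 2 * u x := by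
  have hdu : DifferentiableAt ℝ (deriv u) x := by
    have : ContDiffOn ℝ ∞ (deriv u) (Ioi 0) :=
      ((contDiffOn_infty_iff_deriv_of_isOpen isOpen_Ioi).1 hu).2
    exact diffAt this hx
  have hder : deriv (Dop u) x = deriv u x + x * deriv (deriv u) x := by
    have e : Dop u = fun y => y * deriv u y := rfl
    rw [e, deriv_fun_mul differentiableAt_fun_id hdu]
    simp
  have hDop : Dop (Dop u) x = x * deriv u x + x ^ 2 * deriv (deriv u) x := by
    have h1 : Dop (Dop u) x = x * deriv (Dop u) x := rfl
    rw [h1, hder]; ring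
  have hE : Eul α lam u x = x ^ 2 * deriv (deriv u) x + α * x * deriv u x + lam * u x := rfl
  have hD1 : Dop u x = x * deriv u x := rfl
  rw [hE, hDop, hD1, hα, hlam]
  ring

private lemma dop_rpow_mul {g : ℝ → ℝ} {x : ℝ} (hx : x ∈ Ioi (0:ℝ))
    (hd : DifferentiableAt ℝ g x) (φ : ℝ) :
    Dop (fun y => y ^ (-φ) * g y) x = x ^ (-φ) * Dop g x - φ * (x ^ (-φ) * g x) := by
  have hx0 : (0:ℝ) < x := hx
  have h1 : HasDerivAt (fun y : ℝ => y ^ (-φ)) (-φ * x ^ (-φ - 1)) x :=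
    Real.hasDerivAt_rpow_const (Or.inl hx0.ne')
  have h2 := h1.mul hd.hasDerivAt
  rw [Dop, show (fun y => y ^ (-φ) * g y) = (fun y => y ^ (-φ)) * g from rfl, h2.deriv]
  have hxx : x * x ^ (-φ - 1) = x ^ (-φ) := by
    calc x * x ^ (-φ - 1) = x ^ (1:ℝ) * x ^ (-φ - 1) := by rw [Real.rpow_one]
    _ = x ^ (1 + (-φ - 1)) := (Real.rpow_add hx0 _ _).symm
    _ = x ^ (-φ) := by ring_nf
  simp only [Dop]
  linear_combination (-(φ * g x)) * hxx

private lemma eul_rpow_mul (α lam φ : ℝ) (hα : α = 2*φ+1) (hlam : lam = φ^2)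
    {g : ℝ → ℝ} (hg : ContDiffOn ℝ ∞ g (Ioi 0)) {x : ℝ} (hx : x ∈ Ioi (0:ℝ)) :
    Eul α lam (fun y => y ^ (-φ) * g y) x = x ^ (-φ) * Dop (Dop g) x := by
  set f : ℝ → ℝ := fun y => y ^ (-φ) * g y with hfdef
  have hf : ContDiffOn ℝ ∞ f (Ioi 0) := smooth_rpow_mul hg (-φ)
  have hgd : ContDiffOn ℝ ∞ (Dop g) (Ioi 0) := dop_smooth hg
  have key : EqOn (fun y => Dop f y + φ * f y) (fun y => y ^ (-φ) * Dop g y) (Ioi 0) := by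
    intro y hy
    have hd := dop_rpow_mul hy (diffAt hg hy) φ
    simp only [hfdef]
    rw [hd]
    ring
  have hDf : DifferentiableAt ℝ (Dop f) x := diffAt (dop_smooth hf) hx
  have hfx : DifferentiableAt ℝ f x := diffAt hf hx
  have e1 : Dop (fun y => Dop f y + φ * f y) x = Dop (Dop f) x + φ * Dop f x := by
    have h2' : deriv (fun y => Dop f y + φ * f y) x = deriv (Dop f) x + φ * deriv f x := by
      rw [deriv_fun_add hDf (hfx.const_mul φ), deriv_const_mul φ hfx]
    show x * deriv (fun y => Dop f y + φ * f y) x = x * deriv (Dop f) x + φ * (x * deriv f x)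
    rw [h2']; ring
  have e2 : Dop (fun y => Dop f y + φ * f y) x = Dop (fun y => y ^ (-φ) * Dop g y) x :=
    dop_congr key hx
  have e3 : Dop (fun y => y ^ (-φ) * Dop g y) x
      = x ^ (-φ) * Dop (Dop g) x - φ * (x ^ (-φ) * Dop g x) :=
    dop_rpow_mul hx (diffAt hgd hx) φ
  have e4 : Dop f x + φ * f x = x ^ (-φ) * Dop g x := key hx
  have E1 : Dop (Dop f) x + φ * Dop f x
      = x ^ (-φ) * Dop (Dop g) x - φ * (x ^ (-φ) * Dop g x) := by
    rw [← e1, e2, e3]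
  rw [eul_eq α lam φ hα hlam hf hx]
  linear_combination E1 + φ * e4

private lemma eul_iter_rpow_mul (α lam φ : ℝ) (hα : α = 2*φ+1) (hlam : lam = φ^2)
    (m : ℕ) {g : ℝ → ℝ} (hg : ContDiffOn ℝ ∞ g (Ioi 0)) :
    EqOn ((Eul α lam)^[m] (fun y => y ^ (-φ) * g y))
      (fun x => x ^ (-φ) * Dop^[2*m] g x) (Ioi 0) := by
  induction m generalizing g with
  | zero => intro x hx; simp
  | succ m ih =>
    intro x hx
    rw [Function.iterate_succ_apply]
    have h1 : EqOn (Eul α lam (fun y => y ^ (-φ) * g y))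
        (fun y => y ^ (-φ) * Dop (Dop g) y) (Ioi 0) :=
      fun y hy => eul_rpow_mul α lam φ hα hlam hg hy
    rw [eul_iter_congr α lam m h1 hx]
    have h3 := ih (dop_smooth (dop_smooth hg)) hx
    rw [h3]
    have h4 : 2*(m+1) = 2*m + 1 + 1 := by ring
    rw [h4, Function.iterate_succ_apply, Function.iterate_succ_apply]

private lemma dop_iter_poly (p : ℝ[X]) (m : ℕ) :
    EqOn (Dop^[m] (fun y => p.eval (Real.log y)))
      (fun x => (derivative^[m] p).eval (Real.log x)) (Ioi 0) := by
  induction m generalizing p with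
  | zero => intro x hx; simp
  | succ m ih =>
    intro x hx
    have hx0 : (0:ℝ) < x := hx
    have hev : Dop^[m] (fun y => p.eval (Real.log y))
        =ᶠ[nhds x] (fun y => (derivative^[m] p).eval (Real.log y)) :=
      eventuallyEq_of_mem (mem_nhds_Ioi' hx) (ih p)
    rw [Function.iterate_succ_apply', Dop, hev.deriv_eq]
    have hder : HasDerivAt (fun y => (derivative^[m] p).eval (Real.log y))
        ((derivative^[m+1] p).eval (Real.log x) * x⁻¹) x := by
      have := (Polynomial.hasDerivAt (derivative^[m] p) (Real.log x)).comp x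
        (Real.hasDerivAt_log hx0.ne')
      rw [Function.iterate_succ_apply']
      exact this
    rw [hder.deriv]
    field_simp

private lemma contDiff_polyeval (p : ℝ[X]) : ContDiff ℝ ∞ fun x : ℝ => p.eval x := by
  induction p using Polynomial.induction_on' with
  | add p q hp hq => simpa using hp.add hq
  | monomial n a =>
    simp only [Polynomial.eval_monomial]
    exact contDiff_const.mul (contDiff_id.pow n)

private lemma smooth_polylog (p : ℝ[X]) :
    ContDiffOn ℝ ∞ (fun y => p.eval (Real.log y)) (Ioi 0) := by
  refine (contDiff_polyeval p).comp_contDiffOn (Real.contDiffOn_log.mono ?_)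
  intro x hx
  exact ne_of_gt hx

private lemma exists_antideriv (p : ℝ[X]) : ∃ q : ℝ[X], derivative q = p := by
  refine ⟨p.sum fun n a => C (a / (n+1)) * X^(n+1), ?_⟩
  rw [Polynomial.sum_def, map_sum]
  conv_rhs => rw [← Polynomial.sum_C_mul_X_pow_eq p]
  rw [Polynomial.sum_def]
  refine Finset.sum_congr rfl fun n hn => ?_
  rw [Polynomial.derivative_C_mul, Polynomial.derivative_X_pow, ← mul_assoc,
    ← Polynomial.C_mul, Nat.add_sub_cancel]
  congr 2
  push_cast
  field_simp

private lemma dop_iter_zero_imp (m : ℕ) : ∀ g : ℝ → ℝ, ContDiffOn ℝ ∞ g (Ioi 0) →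
    (∀ x ∈ Ioi (0:ℝ), Dop^[m] g x = 0) →
    ∃ p : ℝ[X], derivative^[m] p = 0 ∧ EqOn g (fun x => p.eval (Real.log x)) (Ioi 0) := by
  induction m with
  | zero =>
    intro g hg h0
    exact ⟨0, rfl, fun x hx => by simpa using h0 x hx⟩
  | succ m ih =>
    intro g hg h0
    obtain ⟨p, hp0, hp⟩ := ih (Dop g) (dop_smooth hg) (fun x hx => by
      have := h0 x hx; rwa [Function.iterate_succ_apply] at this)
    obtain ⟨q, hq⟩ := exists_antideriv p
    set F : ℝ → ℝ := fun x => g x - q.eval (Real.log x) with hFdef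
    have hFd : ∀ x ∈ Ioi (0:ℝ), HasDerivAt F 0 x := by
      intro x hx
      have hx0 : (0:ℝ) < x := hx
      have h1 : HasDerivAt g (deriv g x) x := (diffAt hg hx).hasDerivAt
      have h2 : HasDerivAt (fun y => q.eval (Real.log y)) (p.eval (Real.log x) * x⁻¹) x := by
        have := (Polynomial.hasDerivAt q (Real.log x)).comp x (Real.hasDerivAt_log hx0.ne')
        rwa [hq] at this
      have h3 : deriv g x = p.eval (Real.log x) * x⁻¹ := by
        have hD := hp hx
        simp only [Dop] at hD
        field_simp
        linear_combination hD
      have h4 := h1.sub h2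
      rw [h3, sub_self] at h4
      exact h4
    have hconst : ∀ x ∈ Ioi (0:ℝ), F x = F 1 := by
      intro x hx
      refine (convex_Ioi (0:ℝ)).is_const_of_fderivWithin_eq_zero
        (fun y hy => ((hFd y hy).differentiableAt).differentiableWithinAt)
        (fun y hy => ?_) hx (mem_Ioi.mpr one_pos)
      rw [fderivWithin_of_isOpen isOpen_Ioi hy, ← toSpanSingleton_deriv, (hFd y hy).deriv]
      apply ContinuousLinearMap.ext
      intro z
      simp
    refine ⟨q + C (F 1), ?_, ?_⟩
    · rw [Function.iterate_succ_apply, map_add, hq]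
      simp [hp0]
    · intro x hx
      have hFx : F x = g x - q.eval (Real.log x) := rfl
      have hc := hconst x hx
      simp only [Polynomial.eval_add, Polynomial.eval_C]
      rw [hFx] at hc
      linarith

private lemma coeff_vanish {p : ℝ[X]} {m : ℕ} (h : derivative^[m] p = 0) :
    ∀ n, m ≤ n → p.coeff n = 0 := by
  intro n hn
  have hc := Polynomial.coeff_iterate_derivative p (k := m) (n - m)
  rw [h] at hc
  simp only [Polynomial.coeff_zero] at hc
  rw [Nat.sub_add_cancel hn] at hc
  have hd : (n - m + m).descFactorial m ≠ 0 := by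
    rw [Nat.sub_add_cancel hn]
    simp only [ne_eq, Nat.descFactorial_eq_zero_iff_lt]
    omega
  rw [Nat.sub_add_cancel hn] at hd
  have := hc.symm
  rw [nsmul_eq_mul] at this
  rcases mul_eq_zero.mp this with h' | h'
  · exact absurd (by exact_mod_cast h') hd
  · exact h'

theorem stmt19 (α lam : ℝ) (h : (α - 1) ^ 2 = 4 * lam) (φ : ℝ) (hφ : φ = (α - 1) / 2)
    (k : ℕ) (hk : 1 ≤ k) :
    (∀ u : ℝ → ℝ, ContDiffOn ℝ (⊤ : ℕ∞) u (Ioi (0 : ℝ)) → ∀ x ∈ Ioi (0 : ℝ),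
        Eul α lam u x = Dop (Dop u) x + 2 * φ * Dop u x + φ ^ 2 * u x) ∧
    (∀ u : ℝ → ℝ, ContDiffOn ℝ (⊤ : ℕ∞) u (Ioi (0 : ℝ)) →
        ((∀ x ∈ Ioi (0 : ℝ), (Eul α lam)^[k] u x = 0) ↔
          ∃ c : Fin (2 * k) → ℝ, ∀ x ∈ Ioi (0 : ℝ),
            u x = ∑ l : Fin (2 * k), c l * x ^ (-φ) * Real.log x ^ (l : ℕ))) := by
  have hα : α = 2*φ + 1 := by rw [hφ]; ring
  have hlam : lam = φ^2 := by rw [hφ]; field_simp; linarith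
  constructor
  · intro u hu x hx
    exact eul_eq α lam φ hα hlam (hu.of_le (by simp)) hx
  · intro u hu
    have hu' : ContDiffOn ℝ ∞ u (Ioi 0) := hu.of_le (by simp)
    constructor
    · intro hsol
      set g : ℝ → ℝ := fun y => y ^ φ * u y with hgdef
      have hgs : ContDiffOn ℝ ∞ g (Ioi 0) := smooth_rpow_mul hu' φ
      have hueq : EqOn u (fun y => y ^ (-φ) * g y) (Ioi 0) := by
        intro y hy
        have hy0 : (0:ℝ) < y := hy
        simp only [hgdef]
        rw [← mul_assoc, ← Real.rpow_add hy0, neg_add_cancel, Real.rpow_zero, one_mul]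
      have hDzero : ∀ x ∈ Ioi (0:ℝ), Dop^[2*k] g x = 0 := by
        intro x hx
        have h1 := eul_iter_congr α lam k hueq hx
        have h2 := eul_iter_rpow_mul α lam φ hα hlam k hgs hx
        have h3 := hsol x hx
        rw [h1, h2] at h3
        have hxpos : (0:ℝ) < x ^ (-φ) := Real.rpow_pos_of_pos hx _
        exact (mul_eq_zero.mp h3).resolve_left (ne_of_gt hxpos)
      obtain ⟨p, hp0, hp⟩ := dop_iter_zero_imp (2*k) g hgs hDzero
      refine ⟨fun l => p.coeff l, fun x hx => ?_⟩
      have hcz : ∀ n, 2*k ≤ n → p.coeff n = 0 := coeff_vanish hp0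
      have hdeg : p.natDegree < 2*k := by
        rcases eq_or_ne p 0 with rfl | hpne
        · simp only [Polynomial.natDegree_zero]
          omega
        · by_contra hcon
          push_neg at hcon
          exact hpne (Polynomial.leadingCoeff_eq_zero.mp (hcz _ hcon))
      have hu_eval : u x = x ^ (-φ) * p.eval (Real.log x) := by
        have h1 := hueq hx
        have h2 : x ^ φ * u x = p.eval (Real.log x) := hp hx
        rw [h1]
        show x ^ (-φ) * (x ^ φ * u x) = x ^ (-φ) * p.eval (Real.log x)
        rw [h2]
      rw [hu_eval, Polynomial.eval_eq_sum_range' hdeg, Finset.mul_sum,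
        ← Fin.sum_univ_eq_sum_range (fun i => x ^ (-φ) * (p.coeff i * Real.log x ^ i)) (2*k)]
      refine Finset.sum_congr rfl fun l _ => ?_
      ring
    · rintro ⟨c, hc⟩ x hx
      set p : ℝ[X] := ∑ l : Fin (2*k), C (c l) * X^(l:ℕ) with hpdef
      have hpeval : ∀ t : ℝ, p.eval t = ∑ l : Fin (2*k), c l * t ^ (l:ℕ) := by
        intro t
        simp [hpdef, Polynomial.eval_finset_sum]
      have hgE : EqOn u (fun y => y ^ (-φ) * (fun y => p.eval (Real.log y)) y) (Ioi 0) := by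
        intro y hy
        rw [hc y hy]
        simp only
        rw [hpeval, Finset.mul_sum]
        refine Finset.sum_congr rfl fun l _ => ?_
        ring
      rw [eul_iter_congr α lam k hgE hx,
        eul_iter_rpow_mul α lam φ hα hlam k (smooth_polylog p) hx]
      show x ^ (-φ) * Dop^[2*k] (fun y => p.eval (Real.log y)) x = 0
      rw [dop_iter_poly p (2*k) hx]
      have hdeg : p.natDegree < 2*k := by
        have hb : p.natDegree ≤ 2*k - 1 := by
          refine Polynomial.natDegree_sum_le_of_forall_le _ _ fun l _ => ?_
          refine le_trans (Polynomial.natDegree_C_mul_le _ _) ?_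
          rw [Polynomial.natDegree_X_pow]
          omega
        omega
      rw [Polynomial.iterate_derivative_eq_zero hdeg]
      simp
end
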